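/- Let $u, v$ be real-valued $C^1$ functions defined on a neighborhood of $0$ in $\mathbb{R}$ with $u(x) < 0 < v(x)$ for all $x$ in the domain. Then there exists $\eta > 0$ such that for every $0 < \theta \leq \eta$, the set $S = \{(x,y) \in \mathbb{R}^2 : x \in [-\theta,\theta],\ u(x) \leq y \leq v(x)\}$ is star-shaped with respect to the origin. -/
import Mathlib


open Set

theorem stmt5 (a : ℝ) (ha : 0 < a) (u v : ℝ → ℝ)
    (hu : ContDiffOn ℝ 1 u (Ioo (-a) a)) (hv : ContDiffOn ℝ 1 v (Ioo (-a) a))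
    (huv : ∀ x ∈ Ioo (-a) a, u x < 0 ∧ 0 < v x) :
    ∃ η : ℝ, 0 < η ∧ η < a ∧ ∀ θ : ℝ, 0 < θ → θ ≤ η →
      StarConvex ℝ ((0, 0) : ℝ × ℝ)
        {p : ℝ × ℝ | p.1 ∈ Icc (-θ) θ ∧ u p.1 ≤ p.2 ∧ p.2 ≤ v p.1} := by
  have hmem : Ioo (-a) a ∈ nhds (0:ℝ) := Ioo_mem_nhds (by linarith) ha
  have h0 : (0:ℝ) ∈ Ioo (-a) a := ⟨by linarith, ha⟩
  obtain ⟨hu0, hv0⟩ := huv 0 h0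
  obtain ⟨K, s, hs, hK⟩ := (hu.contDiffAt hmem).exists_lipschitzOnWith
  obtain ⟨K', s', hs', hK'⟩ := (hv.contDiffAt hmem).exists_lipschitzOnWith
  have hs1 : ∀ᶠ x in nhds (0:ℝ), x ∈ s := hs
  have hs'1 : ∀ᶠ x in nhds (0:ℝ), x ∈ s' := hs'
  have hcu : ContinuousAt u 0 := (hu.continuousOn.continuousAt hmem)
  have hcv : ContinuousAt v 0 := (hv.continuousOn.continuousAt hmem)
  have h1 : ∀ᶠ x in nhds (0:ℝ), u x < u 0 / 2 := hcu (Iio_mem_nhds (by linarith))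
  have h2 : ∀ᶠ x in nhds (0:ℝ), v 0 / 2 < v x := hcv (Ioi_mem_nhds (by linarith))
  have hall : ∀ᶠ x in nhds (0:ℝ), (u x < u 0 / 2 ∧ v 0 / 2 < v x) ∧ (x ∈ s ∧ x ∈ s') :=
    (h1.and h2).and (hs1.and hs'1)
  rw [Metric.eventually_nhds_iff] at hall
  obtain ⟨ε, hε, hball⟩ := hall
  set η : ℝ := min (ε/2) (min (a/2) (min ((-(u 0))/(2*((K:ℝ)+1))) ((v 0)/(2*((K':ℝ)+1))))) with hη
  have hK1 : (0:ℝ) < (K:ℝ) + 1 := by positivity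
  have hK'1 : (0:ℝ) < (K':ℝ) + 1 := by positivity
  have hηpos : 0 < η := by
    apply lt_min (by linarith)
    apply lt_min (by linarith)
    apply lt_min
    · apply div_pos (by linarith) (by linarith)
    · apply div_pos hv0 (by linarith)
  refine ⟨η, hηpos, by
    calc η ≤ a/2 := le_trans (min_le_right _ _) (min_le_left _ _)
    _ < a := by linarith, ?_⟩
  have hηε : η ≤ ε/2 := min_le_left _ _
  have hηu : η * ((K:ℝ)+1) ≤ -(u 0)/2 := by
    have h : η ≤ (-(u 0))/(2*((K:ℝ)+1)) :=
      le_trans (min_le_right _ _) (le_trans (min_le_right _ _) (min_le_left _ _))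
    calc η * ((K:ℝ)+1) ≤ (-(u 0))/(2*((K:ℝ)+1)) * ((K:ℝ)+1) :=
          mul_le_mul_of_nonneg_right h (by linarith)
      _ = -(u 0)/2 := by field_simp
  have hηv : η * ((K':ℝ)+1) ≤ (v 0)/2 := by
    have h : η ≤ (v 0)/(2*((K':ℝ)+1)) :=
      le_trans (min_le_right _ _) (le_trans (min_le_right _ _) (min_le_right _ _))
    calc η * ((K':ℝ)+1) ≤ (v 0)/(2*((K':ℝ)+1)) * ((K':ℝ)+1) :=
          mul_le_mul_of_nonneg_right h (by linarith)
      _ = (v 0)/2 := by field_simp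
  have hKnn : (0:ℝ) ≤ (K:ℝ) := K.coe_nonneg
  have hK'nn : (0:ℝ) ≤ (K':ℝ) := K'.coe_nonneg
  have hKη : (K:ℝ) * η ≤ -(u 0)/2 := by nlinarith
  have hK'η : (K':ℝ) * η ≤ (v 0)/2 := by nlinarith
  have hpt : ∀ x : ℝ, |x| ≤ η → (u x < u 0 / 2 ∧ v 0 / 2 < v x) ∧ (x ∈ s ∧ x ∈ s') := by
    intro x hx
    apply hball
    rw [Real.dist_eq, sub_zero]
    linarith
  intro θ hθpos hθη p hp b c hb hc hbc
  have hc1 : c ≤ 1 := by linarith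
  obtain ⟨⟨hpx1, hpx2⟩, hpu, hpv⟩ := hp
  have hxθ : |p.1| ≤ θ := abs_le.2 ⟨hpx1, hpx2⟩
  have hxabs : |p.1| ≤ η := le_trans hxθ hθη
  have hcxθ : |c * p.1| ≤ θ := by
    rw [abs_mul, abs_of_nonneg hc]
    calc c * |p.1| ≤ 1 * |p.1| := mul_le_mul_of_nonneg_right hc1 (abs_nonneg _)
      _ = |p.1| := one_mul _
      _ ≤ θ := hxθ
  have hcxabs : |c * p.1| ≤ η := le_trans hcxθ hθη
  obtain ⟨⟨hux, hvx⟩, hxs, hxs'⟩ := hpt p.1 hxabs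
  obtain ⟨⟨hucx, hvcx⟩, hcxs, hcxs'⟩ := hpt (c * p.1) hcxabs
  have hlipu : |u (c * p.1) - u p.1| ≤ (K:ℝ) * ((1 - c) * |p.1|) := by
    have h := hK.dist_le_mul _ hcxs _ hxs
    rw [Real.dist_eq, Real.dist_eq] at h
    calc |u (c * p.1) - u p.1| ≤ (K:ℝ) * |c * p.1 - p.1| := h
      _ = (K:ℝ) * ((1 - c) * |p.1|) := by
          rw [show c * p.1 - p.1 = -((1-c)*p.1) by ring, abs_neg, abs_mul,
            abs_of_nonneg (by linarith : (0:ℝ) ≤ 1 - c)]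
  have hlipv : |v (c * p.1) - v p.1| ≤ (K':ℝ) * ((1 - c) * |p.1|) := by
    have h := hK'.dist_le_mul _ hcxs' _ hxs'
    rw [Real.dist_eq, Real.dist_eq] at h
    calc |v (c * p.1) - v p.1| ≤ (K':ℝ) * |c * p.1 - p.1| := h
      _ = (K':ℝ) * ((1 - c) * |p.1|) := by
          rw [show c * p.1 - p.1 = -((1-c)*p.1) by ring, abs_neg, abs_mul,
            abs_of_nonneg (by linarith : (0:ℝ) ≤ 1 - c)]
  have habs1 := (abs_le.1 hlipu).2
  have habs2 := (abs_le.1 hlipv).1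
  have hKx : (K:ℝ) * ((1-c) * |p.1|) ≤ (1-c) * ((K:ℝ) * η) := by
    have h1' : (1-c) * |p.1| ≤ (1-c) * η :=
      mul_le_mul_of_nonneg_left hxabs (by linarith)
    calc (K:ℝ) * ((1-c) * |p.1|) ≤ (K:ℝ) * ((1-c) * η) :=
          mul_le_mul_of_nonneg_left h1' hKnn
      _ = (1-c) * ((K:ℝ) * η) := by ring
  have hK'x : (K':ℝ) * ((1-c) * |p.1|) ≤ (1-c) * ((K':ℝ) * η) := by
    have h1' : (1-c) * |p.1| ≤ (1-c) * η :=
      mul_le_mul_of_nonneg_left hxabs (by linarith)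
    calc (K':ℝ) * ((1-c) * |p.1|) ≤ (K':ℝ) * ((1-c) * η) :=
          mul_le_mul_of_nonneg_left h1' hK'nn
      _ = (1-c) * ((K':ℝ) * η) := by ring
  have goal1 : b • ((0,0) : ℝ × ℝ) + c • p = (c * p.1, c * p.2) := by
    simp [Prod.ext_iff, smul_eq_mul]
  rw [goal1]
  have habs := abs_le.1 hcxθ
  refine ⟨⟨habs.1, habs.2⟩, ?_, ?_⟩
  · -- u (c * p.1) ≤ c * p.2
    have m1 : c * u p.1 ≤ c * p.2 := mul_le_mul_of_nonneg_left hpu hc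
    have m2 : (1-c) * u p.1 ≤ (1-c) * (u 0 / 2) :=
      mul_le_mul_of_nonneg_left hux.le (by linarith)
    have m3 : (1-c) * ((K:ℝ) * η) ≤ (1-c) * (-(u 0)/2) :=
      mul_le_mul_of_nonneg_left hKη (by linarith)
    have e2 : c * u p.1 + (1-c) * u p.1 = u p.1 := by ring
    have e3 : (1-c) * (u 0 / 2) + (1-c) * (-(u 0)/2) = 0 := by ring
    show u (c * p.1) ≤ c * p.2
    linarith [habs1, hKx, m1, m2, m3, e2, e3]
  · have m1 : c * p.2 ≤ c * v p.1 := mul_le_mul_of_nonneg_left hpv hc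
    have m2 : (1-c) * (v 0 / 2) ≤ (1-c) * v p.1 :=
      mul_le_mul_of_nonneg_left hvx.le (by linarith)
    have m3 : (1-c) * ((K':ℝ) * η) ≤ (1-c) * (v 0/2) :=
      mul_le_mul_of_nonneg_left hK'η (by linarith)
    have e2 : c * v p.1 + (1-c) * v p.1 = v p.1 := by ring
    show c * p.2 ≤ v (c * p.1)
    linarith [habs2, hK'x, m1, m2, m3, e2]
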